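/- Let (M, d) be a pseudometric space, K a positive integer, μ ∈ M, and μ₁,…,μ_K i.i.d. M-valued random elements with E[d(μ₁, μ)²] < ∞. Let δ ∈ (0,1), K = ⌈8 log(1/δ)⌉, and let j* ∈ {1,…,K} minimize j ↦ min_{I: |I|>K/2} max_{i∈I} d(μ_i, μ_j). Then P(d(μ_{j*}, μ) > 6·√(E[d(μ₁,μ)²])) ≤ δ. -/

import Mathlib

/-!
Let `σ² = E[d(μ₁, μ)²]` and call `μ_k` bad when `d(μ_k, μ) > 2σ`. By Markov's inequality each
`μ_k` is bad with probability at most `1/4`, so by Hoeffding's inequality at least `K/2` of them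
are bad with probability at most `exp(-K/8) ≤ δ`. Otherwise the good points form a majority, so
the objective at a good point, and hence at the minimiser `μ_{j*}`, is at most `4σ`; the majority
realising the objective at `μ_{j*}` meets the good majority, and the triangle inequality through
a common point gives `d(μ_{j*}, μ) ≤ 4σ + 2σ`.
-/

open Finset MeasureTheory ProbabilityTheory

/-- The GROS objective: `ν ↦ min_{I ⊆ [K], |I| > K/2} max_{j ∈ I} d(μ_j, ν)`. -/
noncomputable def grosObj {M : Type*} [PseudoMetricSpace M] (K : ℕ)
    (μs : Fin K → M) (ν : M) : ℝ :=
  ⨅ I : {I : Finset (Fin K) // K < 2 * I.card}, ⨆ j ∈ I.1, dist (μs j) ν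

section Deterministic

variable {M : Type*} [PseudoMetricSpace M] {K : ℕ} (μs : Fin K → M)

lemma grosObj_le_of_forall_dist_le {ν : M} {s : ℝ} {I : Finset (Fin K)}
    (hI : K < 2 * #I) (hs : ∀ j ∈ I, dist (μs j) ν ≤ s) : grosObj K μs ν ≤ s := by
  obtain ⟨j₀, hj₀⟩ : I.Nonempty := card_pos.mp (by omega)
  have hs₀ : 0 ≤ s := dist_nonneg.trans (hs j₀ hj₀)
  refine (ciInf_le ⟨0, ?_⟩ ⟨I, hI⟩).trans (Real.iSup_le (fun j => Real.iSup_le (hs j) hs₀) hs₀)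
  rintro _ ⟨I, rfl⟩
  exact Real.iSup_nonneg fun j => Real.iSup_nonneg fun _ => dist_nonneg

lemma exists_forall_dist_le_grosObj (hK : 0 < K) (ν : M) :
    ∃ I : Finset (Fin K), K < 2 * #I ∧ ∀ j ∈ I, dist (μs j) ν ≤ grosObj K μs ν := by
  have : Nonempty {I : Finset (Fin K) // K < 2 * #I} :=
    ⟨⟨univ, by simp only [card_univ, Fintype.card_fin]; omega⟩⟩
  obtain ⟨⟨I, hI⟩, hIeq⟩ := exists_eq_ciInf_of_finite
    (f := fun I : {I : Finset (Fin K) // K < 2 * #I} => ⨆ j ∈ I.1, dist (μs j) ν)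
  refine ⟨I, hI, fun j hj => ?_⟩
  rw [grosObj, ← hIeq, ← ciSup_pos (f := fun _ => dist (μs j) ν) hj]
  exact le_ciSup (f := fun j => ⨆ _ : j ∈ I, dist (μs j) ν) (Set.finite_range _).bddAbove j

lemma dist_le_three_mul_of_forall_grosObj_le {j : Fin K}
    (hj : ∀ i, grosObj K μs (μs j) ≤ grosObj K μs (μs i)) {ν : M} {t : ℝ}
    (hfar : 2 * #{k | t < dist (μs k) ν} < K) : dist (μs j) ν ≤ 3 * t := by
  have hsplit := card_filter_add_card_filter_not (s := univ) (fun k => dist (μs k) ν ≤ t)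
  simp only [not_le, card_univ, Fintype.card_fin] at hsplit
  set G : Finset (Fin K) := {k | dist (μs k) ν ≤ t}
  have hG : K < 2 * #G := by omega
  obtain ⟨j₀, hj₀⟩ : G.Nonempty := card_pos.mp (by omega)
  have hobj : grosObj K μs (μs j) ≤ 2 * t := by
    refine (hj j₀).trans (grosObj_le_of_forall_dist_le μs hG fun k hk => ?_)
    calc dist (μs k) (μs j₀) ≤ dist (μs k) ν + dist (μs j₀) ν := dist_triangle_right _ _ _
      _ ≤ 2 * t := by linarith [(mem_filter.mp hk).2, (mem_filter.mp hj₀).2]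
  obtain ⟨I, hI, hIj⟩ := exists_forall_dist_le_grosObj μs j₀.pos (μs j)
  obtain ⟨i, hi⟩ := inter_nonempty_of_card_lt_card_add_card (subset_univ I) (subset_univ G)
    (by simp only [card_univ, Fintype.card_fin]; omega)
  have hiI := hIj i (mem_inter.mp hi).1
  have hiG : dist (μs i) ν ≤ t := (mem_filter.mp (mem_inter.mp hi).2).2
  calc dist (μs j) ν ≤ dist (μs i) (μs j) + dist (μs i) ν := dist_triangle_left _ _ _
    _ ≤ 3 * t := by linarith

end Deterministic

section Probabilistic

variable {Ω : Type*} [MeasurableSpace Ω] {μ : Measure Ω}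

lemma measureReal_mul_sqrt_integral_sq_lt_le [IsFiniteMeasure μ] {X : Ω → ℝ}
    (hX : Integrable (fun ω => X ω ^ 2) μ) {c : ℝ} (hc : 0 < c) :
    μ.real {ω | c * √(∫ ω, X ω ^ 2 ∂μ) < X ω} ≤ 1 / c ^ 2 := by
  set E := ∫ ω, X ω ^ 2 ∂μ
  rcases (integral_nonneg fun ω => sq_nonneg (X ω) : 0 ≤ E).eq_or_lt with hE | hE
  · have hX0 : ∀ᵐ ω ∂μ, X ω ^ 2 = 0 :=
      (integral_eq_zero_iff_of_nonneg (fun ω => sq_nonneg _) hX).mp hE.symm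
    have hnull : μ {ω | c * √E < X ω} = 0 := by
      rw [measure_eq_zero_iff_ae_notMem]
      filter_upwards [hX0] with ω hω hlt
      rw [Real.sqrt_eq_zero'.mpr hE.ge, mul_zero, pow_eq_zero_iff two_ne_zero |>.mp hω] at hlt
      exact lt_irrefl 0 hlt
    rw [measureReal_def, hnull, ENNReal.toReal_zero]
    positivity
  · have hsub : {ω | c * √E < X ω} ⊆ {ω | c ^ 2 * E ≤ X ω ^ 2} := fun ω (hω : c * √E < X ω) => by
      have := pow_le_pow_left₀ (by positivity) hω.le 2
      rwa [mul_pow, Real.sq_sqrt hE.le] at this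
    have hmarkov : c ^ 2 * E * μ.real {ω | c ^ 2 * E ≤ X ω ^ 2} ≤ E :=
      mul_meas_ge_le_integral_of_nonneg (.of_forall fun ω => sq_nonneg (X ω)) hX _
    refine (measureReal_mono hsub).trans ?_
    rw [le_div_iff₀' (by positivity)]
    nlinarith

section Hoeffding

variable [IsProbabilityMeasure μ] {ι : Type*} [Fintype ι]

lemma measureReal_card_mul_add_le_sum_le {X : ι → Ω → ℝ} (hind : iIndepFun X μ)
    (hmeas : ∀ i, AEMeasurable (X i) μ) (hX : ∀ i, ∀ᵐ ω ∂μ, X i ω ∈ Set.Icc 0 1)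
    {p ε : ℝ} (hp : ∀ i, μ[X i] ≤ p) (hε : 0 ≤ ε) :
    μ.real {ω | Fintype.card ι * p + ε ≤ ∑ i, X i ω} ≤
      Real.exp (-2 * ε ^ 2 / Fintype.card ι) := by
  have hcentered : iIndepFun (fun i ω => X i ω - μ[X i]) μ :=
    hind.comp (fun i y => y - ∫ ω, X i ω ∂μ) fun i => measurable_id.sub_const _
  have hoeffding := HasSubgaussianMGF.measure_sum_ge_le_of_iIndepFun hcentered (s := univ)
    (fun i _ => hasSubgaussianMGF_of_mem_Icc (hmeas i) (hX i)) hε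
  have hmean : ∑ i, μ[X i] ≤ Fintype.card ι * p := by
    simpa using sum_le_sum fun i (_ : i ∈ univ) => hp i
  have hsub : {ω | Fintype.card ι * p + ε ≤ ∑ i, X i ω} ⊆
      {ω | ε ≤ ∑ i, (X i ω - μ[X i])} := by
    intro ω hω
    simp only [Set.mem_ofPred_eq, sum_sub_distrib] at hω ⊢
    linarith
  refine (measureReal_mono hsub).trans (hoeffding.trans_eq ?_)
  congr 1
  simp only [sub_zero, nnnorm_one, one_div, inv_pow, sum_const, card_univ, nsmul_eq_mul,
    NNReal.coe_mul, NNReal.coe_natCast, NNReal.coe_inv, NNReal.coe_pow, NNReal.coe_ofNat, neg_mul]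
  ring

lemma measureReal_card_mul_add_le_card_mem_le {M : Type*} [MeasurableSpace M] {Y : ι → Ω → M}
    (hY : ∀ i, Measurable (Y i)) (hind : iIndepFun Y μ) {A : Set M} [DecidablePred (· ∈ A)]
    (hA : MeasurableSet A)
    {p ε : ℝ} (hp : ∀ i, μ.real (Y i ⁻¹' A) ≤ p) (hε : 0 ≤ ε) :
    μ.real {ω | Fintype.card ι * p + ε ≤ #{i | Y i ω ∈ A}} ≤
      Real.exp (-2 * ε ^ 2 / Fintype.card ι) := by
  have hmeasA : Measurable (A.indicator (1 : M → ℝ)) := measurable_one.indicator hA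
  have hcount := measureReal_card_mul_add_le_sum_le (hind.comp _ fun _ => hmeasA)
    (fun i => (hmeasA.comp (hY i)).aemeasurable)
    (fun i => .of_forall fun ω => by by_cases h : Y i ω ∈ A <;> simp [h])
    (p := p) (fun i => (integral_indicator_one (hY i hA)).trans_le (hp i)) hε
  convert hcount using 4 with ω
  simp [Set.indicator_apply, sum_boole]

end Hoeffding

end Probabilistic

lemma exp_neg_div_eight_le {δ K : ℝ} (hδ : 0 < δ) (hK : 8 * Real.log (1 / δ) ≤ K) :
    Real.exp (-K / 8) ≤ δ := by
  rw [one_div, Real.log_inv] at hK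
  calc Real.exp (-K / 8) ≤ Real.exp (Real.log δ) := Real.exp_le_exp.mpr (by linarith)
    _ = δ := Real.exp_log hδ

/-- Practical sub-Gaussian aggregation (Theorem 3.1): if the GROS minimization is
restricted to the sample `μ_1,…,μ_K` (choosing an index `j*`), then
`P(d(μ_{j*}, μ) > 6√(E[d(μ₁,μ)²])) ≤ δ` with `K = ⌈8 log(1/δ)⌉`. -/
theorem stmt9 {Ω M : Type*} [MeasureSpace Ω] [IsProbabilityMeasure (ℙ : Measure Ω)]
    [PseudoMetricSpace M] [MeasurableSpace M] [BorelSpace M]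
    (δ : ℝ) (hδ : δ ∈ Set.Ioo (0 : ℝ) 1)
    (K : ℕ) (hKδ : K = ⌈8 * Real.log (1 / δ)⌉₊) (hKpos : 0 < K)
    (μ0 : M) (μs : Fin K → Ω → M) (hmeas : ∀ k, Measurable (μs k))
    (hind : iIndepFun μs ℙ)
    (hident : ∀ k, IdentDistrib (μs k) (μs ⟨0, hKpos⟩) ℙ ℙ)
    (hint : Integrable (fun ω => dist (μs ⟨0, hKpos⟩ ω) μ0 ^ 2) ℙ)
    (jstar : Ω → Fin K)
    (hmin : ∀ᵐ ω ∂ℙ, ∀ j : Fin K,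
      grosObj K (fun k => μs k ω) (μs (jstar ω) ω) ≤
        grosObj K (fun k => μs k ω) (μs j ω)) :
    ℙ {ω | 6 * Real.sqrt (∫ ω', dist (μs ⟨0, hKpos⟩ ω') μ0 ^ 2 ∂ℙ) <
        dist (μs (jstar ω) ω) μ0} ≤ ENNReal.ofReal δ := by
  set σ := √(∫ ω', dist (μs ⟨0, hKpos⟩ ω') μ0 ^ 2 ∂ℙ)
  set A : Set M := {x | 2 * σ < dist x μ0}
  have hA : MeasurableSet A :=
    measurableSet_lt measurable_const (continuous_id.dist continuous_const).measurable
  have hfar : ∀ k, (ℙ : Measure Ω).real (μs k ⁻¹' A) ≤ 1 / 4 := fun k => by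
    rw [measureReal_def, (hident k).measure_mem_eq hA, ← measureReal_def]
    exact (measureReal_mul_sqrt_integral_sq_lt_le hint two_pos).trans_eq (by norm_num)
  have htail : (ℙ : Measure Ω).real {ω | (K : ℝ) * (1 / 4) + K / 4 ≤ #{k | μs k ω ∈ A}} ≤ δ := by
    have hoeffding := measureReal_card_mul_add_le_card_mem_le hmeas hind hA hfar
      (ε := K / 4) (by positivity)
    rw [Fintype.card_fin] at hoeffding
    refine hoeffding.trans ?_
    rw [show -2 * ((K : ℝ) / 4) ^ 2 / K = -K / 8 by field_simp; ring]
    exact exp_neg_div_eight_le hδ.1 (hKδ ▸ Nat.le_ceil _)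
  have hmany : ∀ᵐ ω ∂ℙ, 6 * σ < dist (μs (jstar ω) ω) μ0 →
      (K : ℝ) * (1 / 4) + K / 4 ≤ #{k | μs k ω ∈ A} := by
    filter_upwards [hmin] with ω hjstar hjstar_far
    by_contra! hfew
    have := dist_le_three_mul_of_forall_grosObj_le (fun k => μs k ω) hjstar (t := 2 * σ)
      (by exact_mod_cast (by linarith : 2 * (#{k | μs k ω ∈ A} : ℝ) < K))
    linarith
  calc ℙ {ω | 6 * σ < dist (μs (jstar ω) ω) μ0}
      ≤ ℙ {ω | (K : ℝ) * (1 / 4) + K / 4 ≤ #{k | μs k ω ∈ A}} := measure_mono_ae hmany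
    _ ≤ ENNReal.ofReal δ := by rw [← ofReal_measureReal]; exact ENNReal.ofReal_le_ofReal htail
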